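/- If X is a fully visible CAT(0) cube complex (in which every family of pairwise-crossing hyperplanes is finite), then X is an optical space: for every pair u ≠ v of (visible) 0-simplices of ∂X, there exists a bi-infinite combinatorial geodesic γ: ℝ → X such that W(γ((-∞,0])) represents u and W(γ([0,∞))) represents v. -/

import Mathlib

/-!
Combinatorial model of a CAT(0) cube complex via Sageev duality.

`V` is the set of 0-cubes, `H` the set of hyperplanes, and `side h x : Bool`
records which halfspace of the hyperplane `h` contains the 0-cube `x`.
The axioms say exactly that `V` is the set of consistent orientations of the
hyperplanes, each differing from a fixed one on finitely many hyperplanes;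
this is precisely the combinatorial data of (the 0-skeleton of) a CAT(0) cube
complex, together with its hyperplane structure.
-/
structure CCC where
  V : Type
  H : Type
  side : H → V → Bool
  nonempty_V : Nonempty V
  vertex_ext : ∀ x y : V, (∀ h, side h x = side h y) → x = y
  sep_finite : ∀ x y : V, {h : H | side h x ≠ side h y}.Finite
  halfspace_nonempty : ∀ h b, ∃ x, side h x = b
  hyp_inj : ∀ h h' : H, (∀ x, side h x = side h' x) → h = h'
  hyp_inj' : ∀ h h' : H, (∀ x, side h x = !(side h' x)) → h = h'
  realize : ∀ (o : H → Bool) (x : V),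
    (∀ h h', ∃ y, side h y = o h ∧ side h' y = o h') →
    {h : H | o h ≠ side h x}.Finite →
    ∃ y, ∀ h, side h y = o h

namespace CCC

variable (X : CCC)

/-- The combinatorial (1-skeleton) distance between 0-cubes: the number of
separating hyperplanes. -/
noncomputable def dist (x y : X.V) : ℕ := (X.sep_finite x y).toFinset.card

/-- Two 0-cubes are adjacent (joined by a 1-cube) iff exactly one hyperplane
separates them. -/
def Adj (x y : X.V) : Prop :=
  ∃ h, X.side h x ≠ X.side h y ∧ ∀ h', X.side h' x ≠ X.side h' y → h' = h

/-- Two hyperplanes cross iff all four quarter-spaces are nonempty. -/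
def Crosses (h h' : X.H) : Prop :=
  ∀ b b' : Bool, ∃ x, X.side h x = b ∧ X.side h' x = b'

/-- The hyperplane `h'` lies in the halfspace `b` of the hyperplane `h`. -/
def InHalf (h' h : X.H) (b : Bool) : Prop :=
  h' ≠ h ∧ ∃ c : Bool, ∀ x, X.side h x = !b → X.side h' x = c

/-- `h` separates the hyperplanes `h₁` and `h₂`. -/
def SepH (h h₁ h₂ : X.H) : Prop :=
  ∃ b : Bool, X.InHalf h₁ h b ∧ X.InHalf h₂ h (!b)

/-- Two distinct hyperplanes contact iff no third hyperplane separates them. -/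
def Contact (h h' : X.H) : Prop := h ≠ h' ∧ ¬ ∃ h'', X.SepH h'' h h'

/-- A facing triple: three distinct hyperplanes, each having a halfspace
containing the other two. -/
def FacingTriple (h₁ h₂ h₃ : X.H) : Prop :=
  h₁ ≠ h₂ ∧ h₁ ≠ h₃ ∧ h₂ ≠ h₃ ∧
  ∃ b₁ b₂ b₃ : Bool,
    X.InHalf h₂ h₁ b₁ ∧ X.InHalf h₃ h₁ b₁ ∧
    X.InHalf h₁ h₂ b₂ ∧ X.InHalf h₃ h₂ b₂ ∧
    X.InHalf h₁ h₃ b₃ ∧ X.InHalf h₂ h₃ b₃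

/-- A set of hyperplanes is inseparable if every hyperplane separating two of
its members belongs to it. -/
def Inseparable (U : Set X.H) : Prop :=
  ∀ u ∈ U, ∀ u' ∈ U, ∀ h, X.SepH h u u' → h ∈ U

/-- A set of hyperplanes is unidirectional if each member has a halfspace
containing only finitely many members. -/
def Unidirectional (U : Set X.H) : Prop :=
  ∀ u ∈ U, ∃ b : Bool, {h | h ∈ U ∧ X.InHalf h u b}.Finite

def NoFacingTriple (U : Set X.H) : Prop :=
  ∀ h₁ ∈ U, ∀ h₂ ∈ U, ∀ h₃ ∈ U, ¬ X.FacingTriple h₁ h₂ h₃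

/-- A unidirectional boundary set (UBS). -/
def IsUBS (U : Set X.H) : Prop :=
  U.Infinite ∧ X.Inseparable U ∧ X.Unidirectional U ∧ X.NoFacingTriple U

/-- Almost-equivalence: finite symmetric difference. -/
def AlmostEq (U U' : Set X.H) : Prop := (symmDiff U U').Finite

/-- A minimal UBS. -/
def MinUBS (U : Set X.H) : Prop :=
  X.IsUBS U ∧ ∀ U' ⊆ U, X.IsUBS U' → X.AlmostEq U U'

/-- The simplex (= almost-equivalence class of UBSs) represented by `U` is a
face of the simplex represented by `V`. -/
def FaceOf (U V : Set X.H) : Prop :=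
  ∃ U' V', X.IsUBS U' ∧ X.IsUBS V' ∧ X.AlmostEq U U' ∧ X.AlmostEq V V' ∧ U' ⊆ V'

/-- `U` decomposes, up to almost-equivalence, into `k` pairwise disjoint
minimal UBSs; i.e. the class of `U` is a `(k-1)`-simplex of `∂X`. -/
def HasDim (U : Set X.H) (k : ℕ) : Prop :=
  ∃ 𝒰 : Fin k → Set X.H, (∀ i, X.MinUBS (𝒰 i)) ∧
    (∀ i j, i ≠ j → Disjoint (𝒰 i) (𝒰 j)) ∧ X.AlmostEq U (⋃ i, 𝒰 i)

/-- No infinite family of pairwise-crossing hyperplanes. -/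
def NoInfiniteCrossing : Prop :=
  ∀ S : Set X.H, (∀ h ∈ S, ∀ h' ∈ S, h ≠ h' → X.Crosses h h') → S.Finite

def LocallyFinite : Prop := ∀ x : X.V, {y | X.Adj x y}.Finite

/-- A combinatorial geodesic ray (parameterized by its vertices). -/
def IsGeodesicRay (γ : ℕ → X.V) : Prop :=
  ∀ m n : ℕ, m ≤ n → X.dist (γ m) (γ n) = n - m

/-- A bi-infinite combinatorial geodesic. -/
def IsGeodesicLine (α : ℤ → X.V) : Prop :=
  ∀ m n : ℤ, m ≤ n → (X.dist (α m) (α n) : ℤ) = n - m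

/-- A combinatorial geodesic segment of length `n`. -/
def IsGeodSeg (c : ℕ → X.V) (n : ℕ) : Prop :=
  ∀ i j : ℕ, i ≤ j → j ≤ n → X.dist (c i) (c j) = j - i

/-- The set of hyperplanes crossing (dual to the 1-cubes of) the path `γ`. -/
def WSet (γ : ℕ → X.V) : Set X.H :=
  {h | ∃ n : ℕ, X.side h (γ n) ≠ X.side h (γ (n+1))}

/-- The 0-cubes of the carrier `N(h)` of the hyperplane `h`. -/
def carrier (h : X.H) : Set X.V :=
  {x | ∃ y, X.Adj x y ∧ X.side h x ≠ X.side h y}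

/-- An essential hyperplane: each halfspace contains 0-cubes arbitrarily far
from the carrier. -/
def EssentialHyp (h : X.H) : Prop :=
  ∀ b : Bool, ∀ n : ℕ, ∃ x, X.side h x = b ∧ ∀ y ∈ X.carrier h, n ≤ X.dist x y

/-- Combinatorial convexity of a set of 0-cubes (the 0-skeleton of a convex
subcomplex). -/
def IsConvexSet (S : Set X.V) : Prop :=
  ∀ x ∈ S, ∀ y ∈ S, ∀ z, X.dist x z + X.dist z y = X.dist x y → z ∈ S

/-- `x` and `y` are joined by a combinatorial path avoiding `S`. -/
def ReachAvoid (S : Set X.V) (x y : X.V) : Prop :=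
  ∃ (n : ℕ) (c : ℕ → X.V), c 0 = x ∧ c n = y ∧
    (∀ i < n, X.Adj (c i) (c (i+1))) ∧ ∀ i ≤ n, c i ∉ S

/-- No compact (finite) convex subcomplex disconnects `X`. -/
def CompactlyIndecomposable : Prop :=
  ∀ K : Set X.V, K.Finite → X.IsConvexSet K →
    ∀ x y : X.V, x ∉ K → y ∉ K → X.ReachAvoid K x y

/-- `γ` bounds an eighth-flat: some eighth-flat (the subcomplex of the standard
tiling of `[0,∞)²` below the graph of an unbounded nondecreasing function)
embeds isometrically and cubically in `X` with image containing `γ`. -/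
def BoundsEighthFlat (γ : ℕ → X.V) : Prop :=
  ∃ g : ℕ → ℕ, Monotone g ∧ (∀ N : ℕ, ∃ m, N ≤ g m) ∧
    ∃ e : {p : ℕ × ℕ // p.2 ≤ g p.1} → X.V,
      (∀ p q, X.dist (e p) (e q) = Nat.dist p.1.1 q.1.1 + Nat.dist p.1.2 q.1.2) ∧
      ∀ n : ℕ, ∃ p, e p = γ n

/-- An edge-chain in the contact graph. -/
def CChain (c : ℕ → X.H) (n : ℕ) : Prop := ∀ i < n, X.Contact (c i) (c (i+1))

/-- Distance in the contact graph `C(X)` (`⊤` if there is no path). -/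
noncomputable def cdist (h h' : X.H) : ℕ∞ :=
  sInf {e : ℕ∞ | ∃ (n : ℕ) (c : ℕ → X.H), c 0 = h ∧ c n = h' ∧ X.CChain c n ∧ e = n}

/-- An edge-chain in the crossing graph. -/
def XChain (c : ℕ → X.H) (n : ℕ) : Prop := ∀ i < n, X.Crosses (c i) (c (i+1))

/-- Distance in the crossing graph `Δ(X)`. -/
noncomputable def xdist (h h' : X.H) : ℕ∞ :=
  sInf {e : ℕ∞ | ∃ (n : ℕ) (c : ℕ → X.H), c 0 = h ∧ c n = h' ∧ X.XChain c n ∧ e = n}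

/-- Distance in the full subgraph `Λ(γ)` of the contact graph spanned by the
hyperplanes crossing `γ`. -/
noncomputable def ldist (γ : ℕ → X.V) (h h' : X.H) : ℕ∞ :=
  sInf {e : ℕ∞ | ∃ (n : ℕ) (c : ℕ → X.H), c 0 = h ∧ c n = h' ∧
    (∀ i ≤ n, c i ∈ X.WSet γ) ∧ X.CChain c n ∧ e = n}

/-- Two 0-simplices of `∂X` (represented by minimal UBSs) are adjacent in the
1-skeleton of `∂X`. -/
def BAdj (U V : Set X.H) : Prop :=
  X.MinUBS U ∧ X.MinUBS V ∧ ¬ X.AlmostEq U V ∧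
    ∃ W, X.IsUBS W ∧ X.FaceOf U W ∧ X.FaceOf V W

/-- Distance in the 1-skeleton of the simplicial boundary `∂X`, between the
0-simplices represented by the minimal UBSs `U` and `V`. -/
noncomputable def bdist (U V : Set X.H) : ℕ∞ :=
  sInf {e : ℕ∞ | ∃ (n : ℕ) (c : ℕ → Set X.H),
    X.AlmostEq (c 0) U ∧ X.AlmostEq (c n) V ∧ (∀ i ≤ n, X.MinUBS (c i)) ∧
    (∀ i < n, X.BAdj (c i) (c (i+1)) ∨ X.AlmostEq (c i) (c (i+1))) ∧ e = n}

/-- Diameter of the contact graph. -/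
noncomputable def cdiam : ℕ∞ := ⨆ (h : X.H) (h' : X.H), X.cdist h h'

/-- Diameter of the crossing graph. -/
noncomputable def xdiam : ℕ∞ := ⨆ (h : X.H) (h' : X.H), X.xdist h h'

/-- Diameter of the 1-skeleton of the simplicial boundary. -/
noncomputable def bdiam : ℕ∞ :=
  ⨆ (U : Set X.H) (V : Set X.H) (_ : X.MinUBS U) (_ : X.MinUBS V), X.bdist U V

/-- A consistent orientation of the hyperplanes: any two chosen halfspaces
intersect. -/
def Consistent (χ : X.H → Bool) : Prop :=
  ∀ h h', ∃ x, X.side h x = χ h ∧ X.side h' x = χ h'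

/-- The halfspace `b` of `h`, as a set of 0-cubes. -/
def Hs (h : X.H) (b : Bool) : Set X.V := {x | X.side h x = b}

/-- Every simplex of `∂X` is visible, i.e. represented by the set of
hyperplanes crossing some combinatorial geodesic ray. -/
def FullyVisible : Prop :=
  ∀ V, X.IsUBS V → ∃ γ : ℕ → X.V, X.IsGeodesicRay γ ∧ X.AlmostEq (X.WSet γ) V

/-- The halfspace `b` of `h` is shallow: it lies within uniformly bounded
distance of the carrier of `h`. -/
def ShallowHalf (h : X.H) (b : Bool) : Prop :=
  ∃ R : ℕ, ∀ x, X.side h x = b → ∃ y ∈ X.carrier h, X.dist x y ≤ R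

/-- An `r`-avoiding combinatorial path (with respect to the basepoint `x₀`)
of length `n` from `a` to `b`. -/
def AvoidPathLen (x₀ : X.V) (r : ℕ) (a b : X.V) (n : ℕ) : Prop :=
  ∃ c : ℕ → X.V, c 0 = a ∧ c n = b ∧
    (∀ i < n, X.Adj (c i) (c (i+1))) ∧ ∀ i ≤ n, r ≤ X.dist (c i) x₀

/-- Combinatorial geodesic completeness: for every (finite) maximal family of
pairwise-crossing hyperplanes and every choice of halfspaces, the intersection
of the chosen halfspaces contains 0-cubes arbitrarily far from the
intersection of the carriers. -/
def CombGeodComplete : Prop :=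
  ∀ (n : ℕ) (W : Fin n → X.H), Function.Injective W →
    (∀ i j, i ≠ j → X.Crosses (W i) (W j)) →
    (∀ h, ¬ ∀ i, X.Crosses h (W i)) →
    ∀ χ : Fin n → Bool, ∀ R : ℕ,
      ∃ x, (∀ i, X.side (W i) x = χ i) ∧
        ∀ y, (∀ i, y ∈ X.carrier (W i)) → R ≤ X.dist x y

/-- `X` decomposes as a product of two unbounded convex subcomplexes:
equivalently, the hyperplanes split into two parts, each member of one part
crossing each member of the other, both factors being unbounded. -/
def ProductDecomp : Prop :=
  ∃ H₁ H₂ : Set X.H, Disjoint H₁ H₂ ∧ H₁ ∪ H₂ = Set.univ ∧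
    (∀ h₁ ∈ H₁, ∀ h₂ ∈ H₂, X.Crosses h₁ h₂) ∧
    (∀ n : ℕ, ∃ x y : X.V, n ≤ ({h | X.side h x ≠ X.side h y} ∩ H₁).ncard) ∧
    (∀ n : ℕ, ∃ x y : X.V, n ≤ ({h | X.side h x ≠ X.side h y} ∩ H₂).ncard)

/-- `∂X` decomposes as the simplicial join of two disjoint nonempty
subcomplexes: the 0-simplices split into two nonempty parts, any 0-simplex of
one part spanning a 1-simplex with any 0-simplex of the other. -/
def JoinDecomp : Prop :=
  ∃ 𝒜₁ 𝒜₂ : Set (Set X.H),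
    (∀ U ∈ 𝒜₁, X.MinUBS U) ∧ (∀ U ∈ 𝒜₂, X.MinUBS U) ∧
    𝒜₁.Nonempty ∧ 𝒜₂.Nonempty ∧
    (∀ U U', U ∈ 𝒜₁ → X.MinUBS U' → X.AlmostEq U U' → U' ∈ 𝒜₁) ∧
    (∀ U U', U ∈ 𝒜₂ → X.MinUBS U' → X.AlmostEq U U' → U' ∈ 𝒜₂) ∧
    (∀ U, X.MinUBS U → U ∈ 𝒜₁ ∨ U ∈ 𝒜₂) ∧
    (∀ U ∈ 𝒜₁, ∀ V ∈ 𝒜₂, ¬ X.AlmostEq U V) ∧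
    (∀ U ∈ 𝒜₁, ∀ V ∈ 𝒜₂, ∃ W, X.IsUBS W ∧ X.FaceOf U W ∧ X.FaceOf V W)

/-! Relative versions of the hyperplane notions, for a (convex) subcomplex
with 0-cube set `S`; the hyperplanes of the subcomplex are the hyperplanes of
`X` crossing it. -/

/-- `h` crosses the subcomplex with 0-cubes `S`. -/
def CrossesSet (S : Set X.V) (h : X.H) : Prop :=
  ∃ x ∈ S, ∃ y ∈ S, X.side h x ≠ X.side h y

def InHalfOn (S : Set X.V) (h' h : X.H) (b : Bool) : Prop :=
  h' ≠ h ∧ ∃ c : Bool, ∀ x ∈ S, X.side h x = !b → X.side h' x = c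

def SepHOn (S : Set X.V) (h h₁ h₂ : X.H) : Prop :=
  X.CrossesSet S h ∧ ∃ b : Bool, X.InHalfOn S h₁ h b ∧ X.InHalfOn S h₂ h (!b)

def InseparableOn (S : Set X.V) (U : Set X.H) : Prop :=
  ∀ u ∈ U, ∀ u' ∈ U, ∀ h, X.SepHOn S h u u' → h ∈ U

def UnidirectionalOn (S : Set X.V) (U : Set X.H) : Prop :=
  ∀ u ∈ U, ∃ b : Bool, {h | h ∈ U ∧ X.InHalfOn S h u b}.Finite

def NoFacingTripleOn (S : Set X.V) (U : Set X.H) : Prop :=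
  ∀ h₁ ∈ U, ∀ h₂ ∈ U, ∀ h₃ ∈ U, ¬ (h₁ ≠ h₂ ∧ h₁ ≠ h₃ ∧ h₂ ≠ h₃ ∧
    ∃ b₁ b₂ b₃ : Bool,
      X.InHalfOn S h₂ h₁ b₁ ∧ X.InHalfOn S h₃ h₁ b₁ ∧
      X.InHalfOn S h₁ h₂ b₂ ∧ X.InHalfOn S h₃ h₂ b₂ ∧
      X.InHalfOn S h₁ h₃ b₃ ∧ X.InHalfOn S h₂ h₃ b₃)

/-- A UBS of the subcomplex with 0-cube set `S`. -/
def IsUBSOn (S : Set X.V) (U : Set X.H) : Prop :=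
  (∀ h ∈ U, X.CrossesSet S h) ∧ U.Infinite ∧ X.InseparableOn S U ∧
    X.UnidirectionalOn S U ∧ X.NoFacingTripleOn S U

def MinUBSOn (S : Set X.V) (U : Set X.H) : Prop :=
  X.IsUBSOn S U ∧ ∀ U' ⊆ U, X.IsUBSOn S U' → X.AlmostEq U U'

def FaceOfOn (S : Set X.V) (U V : Set X.H) : Prop :=
  ∃ U' V', X.IsUBSOn S U' ∧ X.IsUBSOn S V' ∧ X.AlmostEq U U' ∧ X.AlmostEq V V' ∧ U' ⊆ V'

def HasDimOn (S : Set X.V) (U : Set X.H) (k : ℕ) : Prop :=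
  ∃ 𝒰 : Fin k → Set X.H, (∀ i, X.MinUBSOn S (𝒰 i)) ∧
    (∀ i j, i ≠ j → Disjoint (𝒰 i) (𝒰 j)) ∧ X.AlmostEq U (⋃ i, 𝒰 i)

end CCC

/-!
Represent the two 0-simplices by geodesic rays `γ`, `γ'` (full visibility). Along a geodesic ray
every hyperplane is crossed at most once, so the ray converges to an orientation `e` of all
hyperplanes, a point of the Roller boundary. Two distinct minimal UBSs meet in a finite set, so
`W(γ) ∩ W(γ')` is finite and the hyperplane-wise majority of `γ 0`, `e` and `e'` differs from
`γ 0` only finitely often: it is a vertex `x`, and at each hyperplane `x` agrees with `e` or with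
`e'`. Geodesic rays from `x` towards `e` and towards `e'` therefore cross disjoint sets of
hyperplanes, and together they form a bi-infinite geodesic.
-/

open Filter

def Bool.majority (a b c : Bool) : Bool := a && b || b && c || c && a

namespace CCC

variable {X : CCC}

section Separation

variable (X) in
def sep (x y : X.V) : Set X.H := {h | X.side h x ≠ X.side h y}

lemma finite_sep (x y : X.V) : (X.sep x y).Finite := X.sep_finite x y

lemma sep_comm (x y : X.V) : X.sep x y = X.sep y x := by
  ext h
  exact ne_comm

lemma dist_eq_ncard (x y : X.V) : X.dist x y = (X.sep x y).ncard :=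
  (Set.ncard_eq_toFinset_card _ (X.sep_finite x y)).symm

lemma dist_comm (x y : X.V) : X.dist x y = X.dist y x := by
  rw [dist_eq_ncard, dist_eq_ncard, sep_comm]

lemma dist_self (x : X.V) : X.dist x x = 0 := by
  simp [dist_eq_ncard, sep]

lemma eq_of_dist_eq_zero {x y : X.V} (h : X.dist x y = 0) : x = y := by
  rw [dist_eq_ncard, Set.ncard_eq_zero (finite_sep x y)] at h
  exact X.vertex_ext x y fun g => not_not.1 fun hg => h.subset hg

lemma symmDiff_sep (x y z : X.V) : symmDiff (X.sep x y) (X.sep y z) = X.sep x z := by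
  ext h
  simp only [sep, Set.mem_symmDiff, Set.mem_ofPred_eq]
  cases X.side h x <;> cases X.side h y <;> cases X.side h z <;> simp

lemma _root_.Set.ncard_symmDiff_add_two_mul_ncard_inter {α : Type*} {s t : Set α}
    (hs : s.Finite) (ht : t.Finite) :
    (symmDiff s t).ncard + 2 * (s ∩ t).ncard = s.ncard + t.ncard := by
  rw [symmDiff_eq_sup_sdiff_inf, ← Set.ncard_union_add_ncard_inter s t hs ht,
    ← Set.ncard_sdiff_add_ncard_of_subset (s := s ∩ t) (t := s ∪ t)
      (Set.inter_subset_left.trans Set.subset_union_left) (hs.union ht)]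
  simp only [Set.sup_eq_union, Set.inf_eq_inter]
  ring

lemma dist_triangle (x y z : X.V) : X.dist x z ≤ X.dist x y + X.dist y z := by
  have := Set.ncard_symmDiff_add_two_mul_ncard_inter (finite_sep x y) (finite_sep y z)
  rw [symmDiff_sep] at this
  simp only [dist_eq_ncard]
  omega

lemma dist_add_dist_eq_iff {x y z : X.V} :
    X.dist x y + X.dist y z = X.dist x z ↔ Disjoint (X.sep x y) (X.sep y z) := by
  have := Set.ncard_symmDiff_add_two_mul_ncard_inter (finite_sep x y) (finite_sep y z)
  rw [symmDiff_sep] at this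
  rw [Set.disjoint_iff_inter_eq_empty, ← Set.ncard_eq_zero ((finite_sep x y).inter_of_left _)]
  simp only [dist_eq_ncard]
  omega

lemma sep_eq_union_of_dist_add_dist {x y z : X.V}
    (h : X.dist x y + X.dist y z = X.dist x z) : X.sep x z = X.sep x y ∪ X.sep y z := by
  rw [← symmDiff_sep, (dist_add_dist_eq_iff.1 h).symmDiff_eq_sup]
  rfl

lemma eq_of_hs_eq {h g : X.H} {b b' : Bool} (he : X.Hs h b = X.Hs g b') : h = g := by
  have hw : ∀ w, X.side h w = b ↔ X.side g w = b' := fun w => Set.ext_iff.1 he w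
  by_cases hbb : b = b'
  · subst hbb
    refine X.hyp_inj h g fun w => ?_
    have := hw w
    revert this
    cases X.side h w <;> cases X.side g w <;> cases b <;> simp
  · refine X.hyp_inj' h g fun w => ?_
    have := hw w
    revert this hbb
    cases X.side h w <;> cases X.side g w <;> cases b <;> cases b' <;> simp

end Separation

section Geodesics

lemma exists_sep_eq_singleton {x : X.V} {h : X.H}
    (hcross : ∀ g ≠ h, ∃ w, X.side h w ≠ X.side h x ∧ X.side g w = X.side g x) :
    ∃ z, X.sep x z = {h} := by
  classical
  set o : X.H → Bool := fun g => if g = h then !X.side h x else X.side g x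
  have hcons : X.Consistent o := by
    intro g g'
    by_cases hg : g = h <;> by_cases hg' : g' = h
    · obtain ⟨w, hw⟩ := X.halfspace_nonempty h (!X.side h x)
      exact ⟨w, by simp [o, hg, hw], by simp [o, hg', hw]⟩
    · obtain ⟨w, hw, hw'⟩ := hcross g' hg'
      exact ⟨w, by simp [o, hg, Bool.eq_not_iff.2 hw], by simp [o, hg', hw']⟩
    · obtain ⟨w, hw', hw⟩ := hcross g hg
      exact ⟨w, by simp [o, hg, hw], by simp [o, hg', Bool.eq_not_iff.2 hw']⟩
    · exact ⟨x, by simp [o, hg], by simp [o, hg']⟩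
  obtain ⟨z, hz⟩ := X.realize o x hcons
    ((Set.finite_singleton h).subset fun g hg => by_contra fun hgh => hg (if_neg hgh))
  refine ⟨z, Set.ext fun g => ?_⟩
  by_cases hgh : g = h <;> simp [sep, hz, o, hgh]

/-- Cross a hyperplane of `sep x y` whose halfspace containing `y` is maximal. -/
lemma exists_dist_eq_one_between {x y : X.V} (hne : x ≠ y) :
    ∃ z, X.dist x z = 1 ∧ X.dist x z + X.dist z y = X.dist x y := by
  have hS : (X.sep x y).Nonempty := by
    rw [Set.nonempty_iff_ne_empty]
    intro hempty
    exact hne (eq_of_dist_eq_zero (by rw [dist_eq_ncard, hempty, Set.ncard_empty]))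
  obtain ⟨h, hhS, hmax⟩ :=
    (finite_sep x y).exists_maximalFor (fun g => X.Hs g (X.side g y)) _ hS
  have hcross : ∀ g ≠ h, ∃ w, X.side h w ≠ X.side h x ∧ X.side g w = X.side g x := by
    intro g hgh
    by_cases hg : g ∈ X.sep x y
    · by_contra! hno
      have hsub : X.Hs h (X.side h y) ⊆ X.Hs g (X.side g y) := fun w hw => by
        have hgw := hno w (hw ▸ Ne.symm hhS)
        have hgxy : X.side g x ≠ X.side g y := hg
        show X.side g w = X.side g y
        revert hgw hgxy
        cases X.side g w <;> cases X.side g x <;> cases X.side g y <;> simp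
      exact hgh (eq_of_hs_eq (hsub.antisymm (hmax hg hsub))).symm
    · exact ⟨y, Ne.symm hhS, (not_not.1 hg).symm⟩
  obtain ⟨z, hxz⟩ := exists_sep_eq_singleton hcross
  refine ⟨z, by rw [dist_eq_ncard, hxz, Set.ncard_singleton], dist_add_dist_eq_iff.2 ?_⟩
  have hhz : X.side h x ≠ X.side h z := (hxz ▸ Set.mem_singleton h : h ∈ X.sep x z)
  have hhy : X.side h x ≠ X.side h y := hhS
  rw [hxz, Set.disjoint_singleton_left]
  show ¬X.side h z ≠ X.side h y
  revert hhz hhy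
  cases X.side h x <;> cases X.side h y <;> cases X.side h z <;> simp

lemma dist_le_of_dist_succ_le_one {c : ℕ → X.V} {a b : ℕ} (hab : a ≤ b)
    (hstep : ∀ i, a ≤ i → i < b → X.dist (c i) (c (i + 1)) ≤ 1) :
    X.dist (c a) (c b) ≤ b - a := by
  induction b, hab using Nat.le_induction with
  | base => simp [dist_self]
  | succ b hab ih =>
    have := dist_triangle (c a) (c b) (c (b + 1))
    have := ih fun i hi hib => hstep i hi (by omega)
    have := hstep b hab (by omega)
    omega

lemma isGeodSeg_of_dist_succ_le_one {c : ℕ → X.V} {n : ℕ}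
    (hstep : ∀ i < n, X.dist (c i) (c (i + 1)) ≤ 1) (hn : X.dist (c 0) (c n) = n) :
    X.IsGeodSeg c n := by
  intro i j hij hjn
  have h₁ := dist_le_of_dist_succ_le_one (c := c) (Nat.zero_le i) fun k _ hk => hstep k (by omega)
  have h₂ := dist_le_of_dist_succ_le_one (c := c) hij fun k _ hk => hstep k (by omega)
  have h₃ := dist_le_of_dist_succ_le_one (c := c) hjn fun k _ hk => hstep k hk
  have := dist_triangle (c 0) (c i) (c n)
  have := dist_triangle (c i) (c j) (c n)
  omega

lemma isGeodesicRay_of_dist_succ_le_one {c : ℕ → X.V}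
    (hstep : ∀ i, X.dist (c i) (c (i + 1)) ≤ 1) (hn : ∀ n, X.dist (c 0) (c n) = n) :
    X.IsGeodesicRay c :=
  fun m n hmn => isGeodSeg_of_dist_succ_le_one (fun i _ => hstep i) (hn n) m n hmn le_rfl

lemma exists_isGeodSeg : ∀ (n : ℕ) (x y : X.V), X.dist x y = n →
    ∃ c : ℕ → X.V, c 0 = x ∧ c n = y ∧ X.IsGeodSeg c n
  | 0, x, y, h => ⟨fun _ => x, rfl, eq_of_dist_eq_zero h, fun i j _ _ => by rw [dist_self]; omega⟩
  | n + 1, x, y, h => by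
    obtain ⟨z, hxz, hzy⟩ := exists_dist_eq_one_between (x := x) (y := y)
      (by rintro rfl; simp [dist_self] at h)
    obtain ⟨c, hc0, hcn, hc⟩ := exists_isGeodSeg n z y (by omega)
    refine ⟨fun | 0 => x | i + 1 => c i, rfl, hcn,
      isGeodSeg_of_dist_succ_le_one ?_ (by simp only [hcn]; exact h)⟩
    rintro (_ | i) hi
    · simp [hc0, hxz]
    · have := hc i (i + 1) (by omega) (by omega)
      show X.dist (c i) (c (i + 1)) ≤ 1
      omega

end Geodesics

section Rays

def ConvergesTo (γ : ℕ → X.V) (e : X.H → Bool) : Prop :=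
  ∀ h, ∀ᶠ n in atTop, X.side h (γ n) = e h

lemma ConvergesTo.consistent {γ : ℕ → X.V} {e : X.H → Bool} (he : X.ConvergesTo γ e) :
    X.Consistent e := fun g g' =>
  let ⟨n, hn⟩ := ((he g).and (he g')).exists
  ⟨γ n, hn⟩

lemma sep_zero_subset_wSet (γ : ℕ → X.V) (n : ℕ) : X.sep (γ 0) (γ n) ⊆ X.WSet γ := by
  induction n with
  | zero => simp [sep]
  | succ n ih =>
    rw [← symmDiff_sep (γ 0) (γ n)]
    exact Set.symmDiff_subset_union.trans (Set.union_subset ih fun h hh => ⟨n, hh⟩)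

namespace IsGeodesicRay

variable {γ : ℕ → X.V} (hγ : X.IsGeodesicRay γ)
include hγ

lemma dist_add_dist {a b c : ℕ} (hab : a ≤ b) (hbc : b ≤ c) :
    X.dist (γ a) (γ b) + X.dist (γ b) (γ c) = X.dist (γ a) (γ c) := by
  rw [hγ a b hab, hγ b c hbc, hγ a c (hab.trans hbc)]
  omega

lemma disjoint_sep {a b c : ℕ} (hab : a ≤ b) (hbc : b ≤ c) :
    Disjoint (X.sep (γ a) (γ b)) (X.sep (γ b) (γ c)) :=
  dist_add_dist_eq_iff.1 (hγ.dist_add_dist hab hbc)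

lemma sep_eq_union {a b c : ℕ} (hab : a ≤ b) (hbc : b ≤ c) :
    X.sep (γ a) (γ c) = X.sep (γ a) (γ b) ∪ X.sep (γ b) (γ c) :=
  sep_eq_union_of_dist_add_dist (hγ.dist_add_dist hab hbc)

lemma mem_wSet_iff {h : X.H} : h ∈ X.WSet γ ↔ ∃ n, h ∈ X.sep (γ 0) (γ n) := by
  refine ⟨fun ⟨n, hn⟩ => ⟨n + 1, ?_⟩, fun ⟨n, hn⟩ => sep_zero_subset_wSet γ n hn⟩
  rw [hγ.sep_eq_union (Nat.zero_le n) n.le_succ]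
  exact Or.inr hn

lemma shift (k : ℕ) : X.IsGeodesicRay fun n => γ (k + n) := fun m n hmn => by
  rw [hγ (k + m) (k + n) (by omega)]
  omega

lemma exists_convergesTo : ∃ e, X.ConvergesTo γ e := by
  have hstable : ∀ h, ∃ N, ∀ n ≥ N, h ∉ X.sep (γ N) (γ n) := by
    intro h
    by_cases hw : h ∈ X.WSet γ
    · obtain ⟨N, hN⟩ := hγ.mem_wSet_iff.1 hw
      exact ⟨N, fun n hn => Set.disjoint_left.1 (hγ.disjoint_sep (Nat.zero_le N) hn) hN⟩
    · exact ⟨0, fun n _ hn => hw (sep_zero_subset_wSet γ n hn)⟩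
  choose N hN using hstable
  exact ⟨fun h => X.side h (γ (N h)),
    fun h => eventually_atTop.2 ⟨N h, fun n hn => (not_not.1 (hN h n hn)).symm⟩⟩

lemma wSet_eq {e : X.H → Bool} (he : X.ConvergesTo γ e) :
    X.WSet γ = {h | X.side h (γ 0) ≠ e h} := by
  ext h
  rw [hγ.mem_wSet_iff, Set.mem_ofPred_eq]
  constructor
  · rintro ⟨N, hN⟩
    obtain ⟨n, hn, hNn⟩ := ((he h).and (eventually_ge_atTop N)).exists
    rw [← hn]
    exact (hγ.sep_eq_union (Nat.zero_le N) hNn ▸ Or.inl hN : h ∈ X.sep (γ 0) (γ n))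
  · intro hne
    obtain ⟨n, hn⟩ := (he h).exists
    exact ⟨n, fun hn' => hne (hn'.trans hn)⟩

lemma almostEq_wSet {δ : ℕ → X.V} (hδ : X.IsGeodesicRay δ) {e : X.H → Bool}
    (hγe : X.ConvergesTo γ e) (hδe : X.ConvergesTo δ e) : X.AlmostEq (X.WSet γ) (X.WSet δ) := by
  rw [AlmostEq, hγ.wSet_eq hγe, hδ.wSet_eq hδe]
  refine (finite_sep (γ 0) (δ 0)).subset fun h hh => ?_
  simp only [Set.mem_symmDiff, Set.mem_ofPred_eq, not_not] at hh
  rcases hh with ⟨h₁, h₂⟩ | ⟨h₁, h₂⟩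
  · rwa [← h₂] at h₁
  · rw [← h₂] at h₁
    exact Ne.symm h₁

end IsGeodesicRay

end Rays

section Lines

lemma isGeodesicRay_append {c γ : ℕ → X.V} {d : ℕ} (hc : X.IsGeodSeg c d)
    (hγ : X.IsGeodesicRay γ) (hcγ : c d = γ 0)
    (hdisj : ∀ n, Disjoint (X.sep (c 0) (γ 0)) (X.sep (γ 0) (γ n))) :
    X.IsGeodesicRay fun n => if n ≤ d then c n else γ (n - d) := by
  set δ : ℕ → X.V := fun n => if n ≤ d then c n else γ (n - d)
  have hδc : ∀ n ≤ d, δ n = c n := fun n hn => if_pos hn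
  have hδγ : ∀ n, δ (d + n) = γ n := by
    intro n
    rcases n with _ | n
    · simp [δ, hcγ]
    · simp [δ]
  refine isGeodesicRay_of_dist_succ_le_one (fun i => ?_) (fun n => ?_)
  · by_cases hi : i < d
    · rw [hδc i hi.le, hδc (i + 1) hi, hc i (i + 1) (by omega) hi]
      omega
    · obtain ⟨m, rfl⟩ := Nat.exists_eq_add_of_le (not_lt.1 hi)
      rw [hδγ, add_assoc, hδγ, hγ m (m + 1) (by omega)]
      omega
  · rw [hδc 0 (Nat.zero_le d)]
    by_cases hn : n ≤ d
    · rw [hδc n hn, hc 0 n (Nat.zero_le n) hn, Nat.sub_zero]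
    · obtain ⟨m, rfl⟩ := Nat.exists_eq_add_of_le (le_of_not_ge hn)
      rw [hδγ, ← dist_add_dist_eq_iff.2 (hdisj m), ← hcγ, hc 0 d (Nat.zero_le d) le_rfl, hcγ,
        hγ 0 m (Nat.zero_le m)]
      omega

/-- Go geodesically from `x` to a point `γ k` far enough along `γ`, then follow `γ`. -/
lemma ConvergesTo.exists_isGeodesicRay {γ : ℕ → X.V} {e : X.H → Bool}
    (he : X.ConvergesTo γ e) (hγ : X.IsGeodesicRay γ) (x : X.V) :
    ∃ δ, X.IsGeodesicRay δ ∧ δ 0 = x ∧ X.ConvergesTo δ e := by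
  obtain ⟨k, hk⟩ : ∃ k, X.sep x (γ 0) ∩ X.WSet γ ⊆ X.sep (γ 0) (γ k) := by
    have hfin : (X.sep x (γ 0) ∩ X.WSet γ).Finite := (finite_sep x (γ 0)).inter_of_left _
    have : ∀ᶠ k in atTop, ∀ h ∈ X.sep x (γ 0) ∩ X.WSet γ, h ∈ X.sep (γ 0) (γ k) := by
      refine (eventually_all_finite hfin).2 fun h hh => ?_
      obtain ⟨n, hn⟩ := hγ.mem_wSet_iff.1 hh.2
      exact eventually_atTop.2 ⟨n, fun m hm => hγ.sep_eq_union (Nat.zero_le n) hm ▸ Or.inl hn⟩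
    exact this.exists
  have hdisj : ∀ n, Disjoint (X.sep x (γ k)) (X.sep (γ k) (γ (k + n))) := by
    refine fun n => Set.disjoint_left.2 fun h hx hkn => ?_
    have hk' : h ∉ X.sep (γ 0) (γ k) :=
      Set.disjoint_right.1 (hγ.disjoint_sep (Nat.zero_le k) (Nat.le_add_right k n)) hkn
    have hw : h ∈ X.WSet γ := sep_zero_subset_wSet γ (k + n)
      (hγ.sep_eq_union (Nat.zero_le k) (Nat.le_add_right k n) ▸ Or.inr hkn)
    rw [← symmDiff_sep x (γ 0), Set.mem_symmDiff] at hx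
    exact hk' (hk ⟨hx.elim And.left fun h' => absurd h'.1 hk', hw⟩)
  obtain ⟨c, hc0, hcd, hc⟩ := exists_isGeodSeg _ x (γ k) rfl
  refine ⟨_, isGeodesicRay_append hc (hγ.shift k) hcd (fun n => ?_), by simp [hc0], fun h => ?_⟩
  · simpa [hc0] using hdisj n
  · obtain ⟨N, hN⟩ := eventually_atTop.1 (he h)
    refine eventually_atTop.2 ⟨N + X.dist x (γ k) + 1, fun n hn => ?_⟩
    simp only [if_neg (show ¬n ≤ X.dist x (γ k) by omega)]
    exact hN _ (by omega)

def joinRays (δ' δ : ℕ → X.V) (t : ℤ) : X.V :=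
  if 0 ≤ t then δ t.toNat else δ' (-t).toNat

lemma joinRays_natCast (δ' δ : ℕ → X.V) : (fun n : ℕ => joinRays δ' δ n) = δ := by
  ext n
  simp [joinRays]

lemma joinRays_neg_natCast {δ' δ : ℕ → X.V} (h0 : δ' 0 = δ 0) :
    (fun n : ℕ => joinRays δ' δ (-(n : ℤ))) = δ' := by
  ext n
  rcases n with _ | n
  · simp [joinRays, h0]
  · simp [joinRays]
    omega

lemma isGeodesicLine_joinRays {δ' δ : ℕ → X.V} (hδ' : X.IsGeodesicRay δ')
    (hδ : X.IsGeodesicRay δ) (h0 : δ' 0 = δ 0) (hdisj : Disjoint (X.WSet δ') (X.WSet δ)) :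
    X.IsGeodesicLine (joinRays δ' δ) := by
  intro m n hmn
  unfold joinRays
  by_cases hm : 0 ≤ m <;> by_cases hn : 0 ≤ n <;> simp only [hm, hn, if_true, if_false]
  · rw [hδ _ _ (by omega)]
    omega
  · omega
  · have hsep : Disjoint (X.sep (δ' (-m).toNat) (δ' 0)) (X.sep (δ' 0) (δ n.toNat)) := by
      rw [sep_comm, h0]
      exact hdisj.mono (h0 ▸ sep_zero_subset_wSet δ' _) (sep_zero_subset_wSet δ _)
    rw [← dist_add_dist_eq_iff.2 hsep, dist_comm, hδ' 0 _ (Nat.zero_le _), h0,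
      hδ 0 _ (Nat.zero_le _)]
    omega
  · rw [dist_comm, hδ' _ _ (by omega)]
    omega

end Lines

section BoundarySets

lemma AlmostEq.symm {U V : Set X.H} (h : X.AlmostEq U V) : X.AlmostEq V U := by
  rwa [AlmostEq, symmDiff_comm]

lemma AlmostEq.trans {U V W : Set X.H} (h₁ : X.AlmostEq U V) (h₂ : X.AlmostEq V W) :
    X.AlmostEq U W :=
  (h₁.union h₂).subset (symmDiff_triangle U V W)

lemma AlmostEq.finite_inter {U U' V V' : Set X.H} (hU : X.AlmostEq U U')
    (hV : X.AlmostEq V V') (h : (U ∩ V).Finite) : (U' ∩ V').Finite := by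
  refine (h.union (hU.union hV)).subset fun g ⟨hgU', hgV'⟩ => ?_
  simp only [Set.mem_union, Set.mem_inter_iff, Set.mem_symmDiff]
  tauto

lemma IsUBS.inter {U V : Set X.H} (hU : X.IsUBS U) (hV : X.Inseparable V)
    (hUV : (U ∩ V).Infinite) : X.IsUBS (U ∩ V) := by
  refine ⟨hUV, fun u hu u' hu' h hsep => ⟨hU.2.1 u hu.1 u' hu'.1 h hsep, hV u hu.2 u' hu'.2 h hsep⟩,
    fun u hu => ?_, fun h₁ hh₁ h₂ hh₂ h₃ hh₃ => hU.2.2.2 h₁ hh₁.1 h₂ hh₂.1 h₃ hh₃.1⟩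
  obtain ⟨b, hb⟩ := hU.2.2.1 u hu.1
  exact ⟨b, hb.subset fun h hh => ⟨hh.1.1, hh.2⟩⟩

lemma MinUBS.finite_inter {U V : Set X.H} (hU : X.MinUBS U) (hV : X.MinUBS V)
    (hUV : ¬X.AlmostEq U V) : (U ∩ V).Finite := by
  by_contra hinf
  have hUBS := hU.1.inter hV.1.2.1 hinf
  exact hUV ((hU.2 _ Set.inter_subset_left hUBS).trans (hV.2 _ Set.inter_subset_right hUBS).symm)

end BoundarySets

section Median

/-- Pigeonhole: at each of two hyperplanes two of the three orientations agree with the majority,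
so one of them agrees with it at both. -/
lemma Consistent.majority {o₁ o₂ o₃ : X.H → Bool} (h₁ : X.Consistent o₁) (h₂ : X.Consistent o₂)
    (h₃ : X.Consistent o₃) : X.Consistent fun h => Bool.majority (o₁ h) (o₂ h) (o₃ h) := by
  intro g g'
  have key : ∀ a b c a' b' c' : Bool,
      (a = Bool.majority a b c ∧ a' = Bool.majority a' b' c') ∨
      (b = Bool.majority a b c ∧ b' = Bool.majority a' b' c') ∨
      (c = Bool.majority a b c ∧ c' = Bool.majority a' b' c') := by
    decide
  obtain ⟨x₁, hx₁⟩ := h₁ g g'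
  obtain ⟨x₂, hx₂⟩ := h₂ g g'
  obtain ⟨x₃, hx₃⟩ := h₃ g g'
  rcases key (o₁ g) (o₂ g) (o₃ g) (o₁ g') (o₂ g') (o₃ g') with h | h | h
  · exact ⟨x₁, hx₁.1.trans h.1, hx₁.2.trans h.2⟩
  · exact ⟨x₂, hx₂.1.trans h.1, hx₂.2.trans h.2⟩
  · exact ⟨x₃, hx₃.1.trans h.1, hx₃.2.trans h.2⟩

lemma exists_vertex_between_ends {γ γ' : ℕ → X.V} {e e' : X.H → Bool}
    (hγ : X.IsGeodesicRay γ) (hγ' : X.IsGeodesicRay γ') (he : X.ConvergesTo γ e)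
    (he' : X.ConvergesTo γ' e') (hfin : (X.WSet γ ∩ X.WSet γ').Finite) :
    ∃ x, ∀ h, X.side h x = e h ∨ X.side h x = e' h := by
  set o : X.H → Bool := fun h => Bool.majority (X.side h (γ 0)) (e h) (e' h)
  have hcons : X.Consistent o :=
    Consistent.majority (fun _ _ => ⟨γ 0, rfl, rfl⟩) he.consistent he'.consistent
  have hdiff : {h | o h ≠ X.side h (γ 0)} ⊆ (X.WSet γ ∩ X.WSet γ') ∪ X.sep (γ 0) (γ' 0) := by
    intro h hh
    obtain ⟨hee', hes⟩ : e h = e' h ∧ X.side h (γ 0) ≠ e h := by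
      revert hh
      simp only [o, Set.mem_ofPred_eq]
      cases X.side h (γ 0) <;> cases e h <;> cases e' h <;> decide
    rw [hγ.wSet_eq he, hγ'.wSet_eq he']
    by_cases h' : X.side h (γ' 0) = e' h
    · exact Or.inr fun hs => hes (hs.trans (h'.trans hee'.symm))
    · exact Or.inl ⟨hes, h'⟩
  obtain ⟨x, hx⟩ := X.realize o (γ 0) hcons ((hfin.union (finite_sep _ _)).subset hdiff)
  refine ⟨x, fun h => ?_⟩
  rw [hx h]
  simp only [o]
  cases X.side h (γ 0) <;> cases e h <;> cases e' h <;> decide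

end Median

end CCC

theorem fully_visible_optical_general (X : CCC) (hfv : X.FullyVisible) :
    ∀ U U' : Set X.H, X.MinUBS U → X.MinUBS U' → ¬ X.AlmostEq U U' →
      ∃ α : ℤ → X.V, X.IsGeodesicLine α ∧
        X.AlmostEq (X.WSet (fun n : ℕ => α (-(n : ℤ)))) U ∧
        X.AlmostEq (X.WSet (fun n : ℕ => α (n : ℤ))) U' := by
  intro U U' hU hU' hUU'
  obtain ⟨γ, hγ, hγU⟩ := hfv U hU.1
  obtain ⟨γ', hγ', hγ'U'⟩ := hfv U' hU'.1
  obtain ⟨e, he⟩ := hγ.exists_convergesTo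
  obtain ⟨e', he'⟩ := hγ'.exists_convergesTo
  obtain ⟨x, hx⟩ := CCC.exists_vertex_between_ends hγ hγ' he he'
    (hγU.symm.finite_inter hγ'U'.symm (hU.finite_inter hU' hUU'))
  obtain ⟨δ, hδ, hδx, hδe⟩ := he.exists_isGeodesicRay hγ x
  obtain ⟨δ', hδ', hδ'x, hδ'e'⟩ := he'.exists_isGeodesicRay hγ' x
  have hdisj : Disjoint (X.WSet δ) (X.WSet δ') := by
    rw [hδ.wSet_eq hδe, hδ'.wSet_eq hδ'e', hδx, hδ'x, Set.disjoint_left]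
    intro h h₁ h₂
    rcases hx h with h₃ | h₃ <;> contradiction
  refine ⟨CCC.joinRays δ δ', CCC.isGeodesicLine_joinRays hδ hδ' (hδx.trans hδ'x.symm) hdisj, ?_, ?_⟩
  · rw [CCC.joinRays_neg_natCast (hδx.trans hδ'x.symm)]
    exact (hδ.almostEq_wSet hγ hδe he).trans hγU
  · rw [CCC.joinRays_natCast]
    exact (hδ'.almostEq_wSet hγ' hδ'e' he').trans hγ'U'

/-- Theorem 4.19 (optical spaces).  A fully visible CAT(0) cube complex is an
optical space: any two distinct 0-simplices of `∂X` (represented by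
non-almost-equivalent minimal UBSs `U, U'`) form a visible pair, i.e. are the
two ends of a bi-infinite combinatorial geodesic. -/
theorem fully_visible_optical (X : CCC) (hX : X.NoInfiniteCrossing)
    (hfv : X.FullyVisible) :
    ∀ U U' : Set X.H, X.MinUBS U → X.MinUBS U' → ¬ X.AlmostEq U U' →
      ∃ α : ℤ → X.V, X.IsGeodesicLine α ∧
        X.AlmostEq (X.WSet (fun n : ℕ => α (-(n : ℤ)))) U ∧
        X.AlmostEq (X.WSet (fun n : ℕ => α (n : ℤ))) U' :=
  fully_visible_optical_general X hfv
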